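/- arXiv:1503.03700 — 4 statements merged into one kernel-verified Lean document; each statement's English description precedes it below -/
import Mathlib

section
/- Let f : [a, x̄F] → f([a, x̄F]) and g : [b, xF] → g([b, xF]) be increasing homeomorphisms such that f(x) < x for all x ∈ [a, x̄F), g(x) < x for all x ∈ [b, xF), and x̄F, xF are the unique fixed points of f and g. Then f and g are topologically conjugate via a homeomorphism h : [a, x̄F] → [b, xF]. -/
open Set

/-- Extend a semi-repelling interval map to an order isomorphism of ℝ. -/
lemma stmt2_exists_extension (f : ℝ → ℝ) (a xb : ℝ) (ha : a < xb)
    (hfm : StrictMonoOn f (Icc a xb)) (hfB : BijOn f (Icc a xb) (Icc (f a) xb))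
    (hfd : ∀ x ∈ Ico a xb, f x < x) (hffix : ∀ x ∈ Icc a xb, f x = x ↔ x = xb) :
    ∃ E : ℝ ≃o ℝ, (∀ x ∈ Icc a xb, E x = f x) ∧ (∀ x < xb, E x < x) ∧
      (∀ x ≤ a, E x = f a + (x - a)) := by
  have ffix : f xb = xb := (hffix xb ⟨ha.le, le_rfl⟩).mpr rfl
  have fa_lt : f a < a := hfd a ⟨le_rfl, ha⟩
  set F : ℝ → ℝ := fun x => if x ≤ a then f a + (x - a) else if x ≤ xb then f x else x with hF
  have heq : ∀ x ∈ Icc a xb, F x = f x := by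
    intro x hx
    by_cases h1 : x ≤ a
    · have : x = a := le_antisymm h1 hx.1
      simp [hF, this]
    · simp [hF, h1, hx.2]
  have hlt : ∀ x < xb, F x < x := by
    intro x hx
    by_cases h1 : x ≤ a
    · simp only [hF, if_pos h1]; linarith
    · push_neg at h1
      simp only [hF, if_neg (not_le.mpr h1), if_pos hx.le]
      exact hfd x ⟨h1.le, hx⟩
  have hfle : ∀ x ∈ Icc a xb, f x ≤ xb := by
    intro x hx
    calc f x ≤ f xb := hfm.monotoneOn hx ⟨ha.le, le_rfl⟩ hx.2
    _ = xb := ffix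
  have hmono : StrictMono F := by
    intro x y hxy
    by_cases hx1 : x ≤ a
    · by_cases hy1 : y ≤ a
      · simp only [hF, if_pos hx1, if_pos hy1]; linarith
      · push_neg at hy1
        have hFx : F x ≤ f a := by simp only [hF, if_pos hx1]; linarith
        by_cases hy2 : y ≤ xb
        · have : f a < f y := hfm ⟨le_rfl, ha.le⟩ ⟨hy1.le, hy2⟩ hy1
          simp only [hF, if_neg (not_le.mpr hy1), if_pos hy2]
          linarith
        · push_neg at hy2
          simp only [hF, if_neg (not_le.mpr hy1), if_neg (not_le.mpr hy2)]
          linarith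
    · push_neg at hx1
      have hy1 : ¬ y ≤ a := not_le.mpr (hx1.trans hxy)
      by_cases hx2 : x ≤ xb
      · by_cases hy2 : y ≤ xb
        · simp only [hF, if_neg (not_le.mpr hx1), if_neg hy1, if_pos hx2, if_pos hy2]
          exact hfm ⟨hx1.le, hx2⟩ ⟨(hx1.trans hxy).le, hy2⟩ hxy
        · push_neg at hy2
          have : f x ≤ xb := hfle x ⟨hx1.le, hx2⟩
          simp only [hF, if_neg (not_le.mpr hx1), if_neg hy1, if_pos hx2, if_neg (not_le.mpr hy2)]
          linarith
      · push_neg at hx2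
        have hy2 : ¬ y ≤ xb := not_le.mpr (hx2.trans hxy)
        simp only [hF, if_neg (not_le.mpr hx1), if_neg hy1, if_neg (not_le.mpr hx2), if_neg hy2]
        exact hxy
  have hsurj : Function.Surjective F := by
    intro y
    rcases le_or_gt y (f a) with hy | hy
    · refine ⟨y - f a + a, ?_⟩
      have : y - f a + a ≤ a := by linarith
      simp only [hF, if_pos this]; ring
    · rcases le_or_gt y xb with hy2 | hy2
      · obtain ⟨x, hx, hfx⟩ := hfB.surjOn ⟨hy.le, hy2⟩
        refine ⟨x, ?_⟩
        have hx1 : ¬ x ≤ a := by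
          intro hle
          have : x = a := le_antisymm hle hx.1
          rw [this] at hfx; exact absurd hfx (by linarith)
        simp only [hF, if_neg hx1, if_pos hx.2]
        exact hfx
      · refine ⟨y, ?_⟩
        have h1 : ¬ y ≤ a := by push_neg; linarith
        have h2 : ¬ y ≤ xb := not_le.mpr hy2
        simp only [hF, if_neg h1, if_neg h2]
  refine ⟨StrictMono.orderIsoOfSurjective F hmono hsurj, ?_, ?_, ?_⟩ <;>
    simp only [StrictMono.coe_orderIsoOfSurjective]
  · exact heq
  · exact hlt
  · intro x hx; simp only [hF, if_pos hx]

/-- The backward orbit of `a` under a semi-repelling order iso converges to the fixed point. -/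
lemma stmt2_exists_iter (E : ℝ ≃o ℝ) (a xb : ℝ) (ha : a < xb)
    (hlt : ∀ x < xb, E x < x) (hfix : E xb = xb) :
    ∀ x < xb, ∃ n, x ≤ (⇑E.symm)^[n] a := by
  set u : ℕ → ℝ := fun n => (⇑E.symm)^[n] a with hu
  have hpres : ∀ x < xb, E.symm x < xb := by
    intro x hx
    have := E.symm.strictMono hx
    rwa [show E.symm xb = xb from E.symm_apply_eq.mpr hfix.symm] at this
  have hub : ∀ n, u n < xb := by
    intro n; induction n with
    | zero => simpa [hu] using ha
    | succ n ih =>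
      have : u (n+1) = E.symm (u n) := Function.iterate_succ_apply' _ _ _
      rw [this]; exact hpres _ ih
  have hmono : Monotone u := by
    refine monotone_nat_of_le_succ fun n => ?_
    have h1 : E (u n) < u n := hlt _ (hub n)
    have h2 := E.symm.strictMono h1
    rw [E.symm_apply_apply] at h2
    have : u (n+1) = E.symm (u n) := Function.iterate_succ_apply' _ _ _
    rw [this]; exact h2.le
  have hbdd : BddAbove (range u) := ⟨xb, by rintro _ ⟨n, rfl⟩; exact (hub n).le⟩
  have htend : Filter.Tendsto u Filter.atTop (nhds (⨆ n, u n)) := tendsto_atTop_ciSup hmono hbdd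
  set L := ⨆ n, u n with hL
  have hL1 : L ≤ xb := ciSup_le fun n => (hub n).le
  have hfixL : E.symm L = L := by
    have t1 : Filter.Tendsto (fun n => u (n+1)) Filter.atTop (nhds L) :=
      htend.comp (Filter.tendsto_add_atTop_nat 1)
    have t2 : Filter.Tendsto (fun n => E.symm (u n)) Filter.atTop (nhds (E.symm L)) :=
      ((OrderIso.continuous E.symm).tendsto L).comp htend
    have : (fun n => u (n+1)) = fun n => E.symm (u n) := by
      funext n; exact Function.iterate_succ_apply' _ _ _
    rw [this] at t1
    exact tendsto_nhds_unique t2 t1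
  have hLxb : L = xb := by
    by_contra hne
    have hLlt : L < xb := lt_of_le_of_ne hL1 hne
    have : E L < L := hlt L hLlt
    have := E.symm.strictMono this
    rw [E.symm_apply_apply, hfixL] at this
    exact lt_irrefl _ this
  intro x hx
  rw [← hLxb] at hx
  obtain ⟨n, hn⟩ := exists_lt_of_lt_ciSup hx
  exact ⟨n, hn.le⟩

/-- conjugacy for increasing homeomorphisms with unique fixed point
at the right endpoint, below the diagonal on the interior (semi-repelling to the left). -/
theorem stmt_2
    (f g : ℝ → ℝ) (a xbF b xF : ℝ)
    (ha : a < xbF) (hb : b < xF)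
    (hfc : ContinuousOn f (Icc a xbF)) (hfm : StrictMonoOn f (Icc a xbF))
    (hfB : BijOn f (Icc a xbF) (Icc (f a) xbF))
    (hgc : ContinuousOn g (Icc b xF)) (hgm : StrictMonoOn g (Icc b xF))
    (hgB : BijOn g (Icc b xF) (Icc (g b) xF))
    (hfd : ∀ x ∈ Ico a xbF, f x < x)
    (hgd : ∀ x ∈ Ico b xF, g x < x)
    (hffix : ∀ x ∈ Icc a xbF, f x = x ↔ x = xbF)
    (hgfix : ∀ x ∈ Icc b xF, g x = x ↔ x = xF) :
    ∃ h : ℝ → ℝ, ContinuousOn h (Icc a xbF) ∧ BijOn h (Icc a xbF) (Icc b xF) ∧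
      ∀ x ∈ Icc a xbF, g (h x) = h (f x) := by
  obtain ⟨E, hEf, hElt, hEtr⟩ := stmt2_exists_extension f a xbF ha hfm hfB hfd hffix
  obtain ⟨Gm, hGg, hGlt, hGtr⟩ := stmt2_exists_extension g b xF hb hgm hgB hgd hgfix
  have ffix : f xbF = xbF := (hffix xbF ⟨ha.le, le_rfl⟩).mpr rfl
  have gfix : g xF = xF := (hgfix xF ⟨hb.le, le_rfl⟩).mpr rfl
  have fa_lt : f a < a := hfd a ⟨le_rfl, ha⟩
  have gb_lt : g b < b := hgd b ⟨le_rfl, hb⟩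
  have hEfix : E xbF = xbF := by rw [hEf xbF ⟨ha.le, le_rfl⟩, ffix]
  have hGfix : Gm xF = xF := by rw [hGg xF ⟨hb.le, le_rfl⟩, gfix]
  have hexE := stmt2_exists_iter E a xbF ha hElt hEfix
  have hexG := stmt2_exists_iter Gm b xF hb hGlt hGfix
  set c : ℝ := f a - a with hc
  set d : ℝ := g b - b with hd
  have hc0 : c < 0 := by rw [hc]; linarith
  have hd0 : d < 0 := by rw [hd]; linarith
  set r : ℝ := d / c with hrdef
  have hr0 : 0 < r := div_pos_of_neg_of_neg hd0 hc0
  set h0 : ℝ → ℝ := fun x => b + (x - a) * r with hh0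
  have hh0mono : StrictMono h0 := by
    intro x y hxy
    simp only [hh0]
    nlinarith
  have hh0a : h0 a = b := by simp [hh0]
  have conj0 : ∀ x ≤ a, h0 (E x) = Gm (h0 x) := by
    intro x hx
    have h1 : E x = x + c := by rw [hEtr x hx, hc]; ring
    have h2 : h0 x ≤ b := by
      have := mul_nonpos_of_nonpos_of_nonneg (by linarith : x - a ≤ 0) hr0.le
      simp only [hh0]; linarith
    have h3 : Gm (h0 x) = h0 x + d := by rw [hGtr _ h2, hd]; ring
    rw [h1, h3]
    simp only [hh0]
    have hcr : c * r = d := by rw [hrdef, mul_comm, div_mul_cancel₀ d (ne_of_lt hc0)]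
    nlinarith [hcr]
  have hEpres : ∀ x < xbF, E.symm x < xbF := by
    intro x hx
    have := E.symm.strictMono hx
    rwa [show E.symm xbF = xbF from E.symm_apply_eq.mpr hEfix.symm] at this
  have hGsymmlt : ∀ n : ℕ, ∀ x < xF, (⇑Gm.symm)^[n] x < xF := by
    intro n
    induction n with
    | zero => intro x hx; simpa using hx
    | succ n ih =>
      intro x hx
      rw [Function.iterate_succ_apply]
      refine ih _ ?_
      have := Gm.symm.strictMono hx
      rwa [show Gm.symm xF = xF from Gm.symm_apply_eq.mpr hGfix.symm] at this
  set u : ℕ → ℝ := fun n => (⇑E.symm)^[n] a with hu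
  have huxb : ∀ n, u n < xbF := by
    intro n
    induction n with
    | zero => simpa [hu] using ha
    | succ n ih =>
      have : u (n+1) = E.symm (u n) := Function.iterate_succ_apply' _ _ _
      rw [this]; exact hEpres _ ih
  have humono : ∀ n, u n < u (n+1) := by
    intro n
    have h1 : E (u n) < u n := hElt _ (huxb n)
    have h2 := E.symm.strictMono h1
    rw [E.symm_apply_apply] at h2
    have : u (n+1) = E.symm (u n) := Function.iterate_succ_apply' _ _ _
    rw [this]; exact h2
  have hEiter_u : ∀ n, (⇑E)^[n] (u n) = a := fun n =>
    (Function.LeftInverse.iterate E.apply_symm_apply n) a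
  have hdom : ∀ n x, x ≤ u n → (⇑E)^[n] x ≤ a := by
    intro n x hx
    have := (E.strictMono.iterate n).monotone hx
    rwa [hEiter_u n] at this
  have hex : ∀ x, x < xbF → ∃ n, (⇑E)^[n] x ≤ a := fun x hx =>
    (hexE x hx).imp fun n hn => hdom n x hn
  set Φ : ℕ → ℝ → ℝ := fun n x => (⇑Gm.symm)^[n] (h0 ((⇑E)^[n] x)) with hΦ
  set h : ℝ → ℝ := fun x =>
    if hx : x < xbF then Φ (Nat.find (hex x hx)) x else xF + (x - xbF) with hh
  have hstep : ∀ n x, (⇑E)^[n] x ≤ a → Φ (n+1) x = Φ n x := by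
    intro n x hxa
    simp only [hΦ]
    rw [Function.iterate_succ_apply' (⇑E) n x, conj0 _ hxa,
      Function.iterate_succ_apply (⇑Gm.symm) n, Gm.symm_apply_apply]
  have hpers : ∀ n x, (⇑E)^[n] x ≤ a → ∀ m, n ≤ m → (⇑E)^[m] x ≤ a := by
    intro n x hxa m hnm
    induction m, hnm using Nat.le_induction with
    | base => exact hxa
    | succ m hm ih =>
      rw [Function.iterate_succ_apply' (⇑E) m x]
      exact le_trans (hElt _ (lt_of_le_of_lt ih ha)).le ih
  have hwd : ∀ x, ∀ hx : x < xbF, ∀ n, x ≤ u n → h x = Φ n x := by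
    intro x hx n hxn
    have hna : (⇑E)^[n] x ≤ a := hdom n x hxn
    simp only [hh]
    rw [dif_pos hx]
    have hNs : (⇑E)^[Nat.find (hex x hx)] x ≤ a := Nat.find_spec (hex x hx)
    have hNn : Nat.find (hex x hx) ≤ n := Nat.find_min' _ hna
    have key : ∀ m, Nat.find (hex x hx) ≤ m → Φ m x = Φ (Nat.find (hex x hx)) x := by
      intro m hm
      induction m, hm using Nat.le_induction with
      | base => rfl
      | succ m hm ih => rw [hstep m x (hpers _ x hNs m hm)]; exact ih
    exact (key n hNn).symm
  have hΦmono : ∀ n, StrictMono (Φ n) := fun n x y hxy =>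
    (Gm.symm.strictMono.iterate n) (hh0mono ((E.strictMono.iterate n) hxy))
  have hha : h a = b := by
    rw [hwd a ha 0 (le_refl _)]
    simp [hΦ, hh0]
  have hhxb : h xbF = xF := by simp [hh]
  have hEna : ∀ n : ℕ, (⇑E)^[n] a = a + n * c := by
    intro n
    induction n with
    | zero => simp
    | succ n ih =>
      have hnc : (n : ℝ) * c ≤ 0 := mul_nonpos_of_nonneg_of_nonpos (Nat.cast_nonneg n) hc0.le
      have hle : a + (n : ℝ) * c ≤ a := by linarith
      rw [Function.iterate_succ_apply' (⇑E) n a, ih, hEtr _ hle]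
      rw [hc]; push_cast; ring
  have hGnb : ∀ n : ℕ, (⇑Gm)^[n] b = b + n * d := by
    intro n
    induction n with
    | zero => simp
    | succ n ih =>
      have hnd : (n : ℝ) * d ≤ 0 := mul_nonpos_of_nonneg_of_nonpos (Nat.cast_nonneg n) hd0.le
      have hle : b + (n : ℝ) * d ≤ b := by linarith
      rw [Function.iterate_succ_apply' (⇑Gm) n b, ih, hGtr _ hle]
      rw [hd]; push_cast; ring
  have hΦa : ∀ n, Φ n a = b := by
    intro n
    simp only [hΦ]
    rw [hEna n]
    have e1 : h0 (a + n * c) = b + n * d := by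
      simp only [hh0]
      have hcr : c * r = d := by rw [hrdef, mul_comm, div_mul_cancel₀ d (ne_of_lt hc0)]
      nlinarith [hcr]
    rw [e1, ← hGnb n, Function.LeftInverse.iterate Gm.symm_apply_apply n]
  have hΦu : ∀ n, Φ n (u n) = (⇑Gm.symm)^[n] b := by
    intro n
    simp only [hΦ]
    rw [hEiter_u n, hh0a]
  have hlt_xF : ∀ x < xbF, h x < xF := by
    intro x hx
    obtain ⟨n, hn⟩ := hexE x hx
    rw [hwd x hx n hn]
    have h1 : (⇑E)^[n] x ≤ a := hdom n x hn
    have h2 : h0 ((⇑E)^[n] x) ≤ b := by rw [← hh0a]; exact hh0mono.monotone h1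
    exact hGsymmlt n _ (lt_of_le_of_lt h2 hb)
  have hsm : StrictMonoOn h (Icc a xbF) := by
    intro x hx y hy hxy
    rcases eq_or_lt_of_le hy.2 with hyeq | hylt
    · rw [hyeq, hhxb]
      exact hlt_xF x (hxy.trans_le hy.2)
    · obtain ⟨n, hn⟩ := hexE y hylt
      rw [hwd x (hxy.trans hylt) n (le_trans hxy.le hn), hwd y hylt n hn]
      exact hΦmono n hxy
  have hmapsto : MapsTo h (Icc a xbF) (Icc b xF) := by
    intro x hx
    constructor
    · rcases eq_or_lt_of_le hx.1 with h1 | h1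
      · rw [← h1, hha]
      · rw [← hha]; exact (hsm ⟨le_rfl, ha.le⟩ hx h1).le
    · rcases eq_or_lt_of_le hx.2 with h1 | h1
      · rw [h1, hhxb]
      · rw [← hhxb]; exact (hsm hx ⟨ha.le, le_rfl⟩ h1).le
  have hsurj : SurjOn h (Icc a xbF) (Icc b xF) := by
    intro y hy
    rcases eq_or_lt_of_le hy.2 with h1 | h1
    · exact ⟨xbF, ⟨ha.le, le_rfl⟩, by rw [hhxb, h1]⟩
    · obtain ⟨n, hn⟩ := hexG y h1
      set x := (⇑E.symm)^[n] (a + ((⇑Gm)^[n] y - b) / r) with hxdef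
      have e1 : (⇑E)^[n] x = a + ((⇑Gm)^[n] y - b) / r :=
        Function.LeftInverse.iterate E.apply_symm_apply n _
      have e2 : h0 (a + ((⇑Gm)^[n] y - b) / r) = (⇑Gm)^[n] y := by
        simp only [hh0]
        rw [add_sub_cancel_left, div_mul_cancel₀ _ (ne_of_gt hr0)]
        ring
      have e3 : Φ n x = y := by
        simp only [hΦ]
        rw [e1, e2, Function.LeftInverse.iterate Gm.symm_apply_apply n]
      have hax : a ≤ x := by
        have : Φ n a ≤ Φ n x := by rw [hΦa n, e3]; exact hy.1
        exact ((hΦmono n).le_iff_le).mp this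
      have hxu : x ≤ u n := by
        have : Φ n x ≤ Φ n (u n) := by rw [e3, hΦu n]; exact hn
        exact ((hΦmono n).le_iff_le).mp this
      have hxlt : x < xbF := lt_of_le_of_lt hxu (huxb n)
      exact ⟨x, ⟨hax, hxlt.le⟩, by rw [hwd x hxlt n hxu]; exact e3⟩
  have hcontΦ : ∀ n, Continuous (Φ n) := by
    intro n
    have c1 : Continuous ⇑E := OrderIso.continuous E
    have c2 : Continuous ⇑Gm.symm := OrderIso.continuous Gm.symm
    have c3 : Continuous h0 := by simp only [hh0]; fun_prop
    exact (c2.iterate n).comp (c3.comp (c1.iterate n))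
  have hcont : ContinuousOn h (Icc a xbF) := by
    intro x hx
    rcases eq_or_lt_of_le hx.2 with h1 | h1
    · subst h1
      have hbetween : ∀ y < h x, ∃ z ∈ Icc a x, h z ∈ Ico y (h x) := by
        intro y hy
        rw [hhxb] at hy
        rcases le_or_gt y b with h2 | h2
        · exact ⟨a, ⟨le_rfl, ha.le⟩, by rw [hha, hhxb]; exact ⟨h2, hb⟩⟩
        · obtain ⟨z, hz, hzy⟩ := hsurj ⟨h2.le, hy.le⟩
          exact ⟨z, hz, by rw [hzy, hhxb]; exact ⟨le_rfl, hy⟩⟩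
      have := StrictMonoOn.continuousWithinAt_left_of_exists_between hsm
        (Icc_mem_nhdsLE_of_mem ⟨ha, le_rfl⟩) hbetween
      exact this.mono Icc_subset_Iic_self
    · obtain ⟨n, hn⟩ := hexE x h1
      have hlt1 : x < u (n+1) := lt_of_le_of_lt hn (humono n)
      have hev : Φ (n+1) =ᶠ[nhds x] h := by
        filter_upwards [Iio_mem_nhds hlt1] with y hy
        exact (hwd y (lt_trans hy (huxb (n+1))) (n+1) hy.le).symm
      exact (((hcontΦ (n+1)).continuousAt).congr hev).continuousWithinAt
  refine ⟨h, hcont, ⟨hmapsto, hsm.injOn, hsurj⟩, ?_⟩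
  intro x hx
  rcases eq_or_lt_of_le hx.2 with h1 | h1
  · rw [h1, hhxb, gfix, ffix, hhxb]
  · obtain ⟨n, hn⟩ := hexE x h1
    have hEx : E x < x := hElt x h1
    have hfx : f x = E x := (hEf x hx).symm
    have hfx_lt : E x < xbF := hEx.trans h1
    have hfx_le : E x ≤ u n := le_trans hEx.le hn
    have hx_le : x ≤ u (n+1) := le_trans hn (humono n).le
    have hmem : Φ (n+1) x ∈ Icc b xF := by
      rw [← hwd x h1 (n+1) hx_le]; exact hmapsto hx
    rw [hfx, hwd (E x) hfx_lt n hfx_le, hwd x h1 (n+1) hx_le, ← hGg _ hmem]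
    simp only [hΦ]
    rw [Function.iterate_succ_apply' (⇑Gm.symm) n, Gm.apply_symm_apply,
      ← Function.iterate_succ_apply (⇑E) n x]
end

section
/- Let g : [xL, xR] → [xL, xR] and f : [x̄L, x̄R] → [x̄L, x̄R] be increasing homeomorphisms such that g(x) > x for all x ∈ (xL, xR), f(x) > x for all x ∈ (x̄L, x̄R), and the endpoints are the only fixed points of g and f respectively. Then there exists an increasing homeomorphism h : [x̄L, x̄R] → [xL, xR] with g ∘ h = h ∘ f. -/
/-!
An order automorphism `F` of a conditionally complete linear order with `x < F x` everywhere has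
unbounded orbits (the supremum of a bounded orbit would be a fixed point), so the translates
`F ^ n '' [c, F c)` tile the whole order. Two such maps `F`, `G` are therefore conjugate as soon as
some order isomorphism `θ` sends `[c, F c)` onto `[θ c, G (θ c))`: glue the maps
`G ^ n ∘ θ ∘ F ^ (-n)` on the tiles. On `ℝ` a linear `θ` does this; open intervals are order
isomorphic to `ℝ`, and the resulting conjugacy of the interiors extends to the closed intervals by
sending endpoints to endpoints.
-/

open Set

namespace OrderIso

variable {α β : Type*}

section Preorder

variable [Preorder α]

theorem zpow_add_one_apply (F : α ≃o α) (n : ℤ) (x : α) : (F ^ (n + 1)) x = F ((F ^ n) x) := by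
  rw [add_comm, zpow_one_add, RelIso.mul_apply]

theorem zpow_add_apply (F : α ≃o α) (m n : ℤ) (x : α) :
    (F ^ (m + n)) x = (F ^ m) ((F ^ n) x) := by
  rw [zpow_add, RelIso.mul_apply]

theorem zpow_neg_apply_zpow_apply (F : α ≃o α) (n : ℤ) (x : α) :
    (F ^ (-n)) ((F ^ n) x) = x := by
  rw [← zpow_add_apply, neg_add_cancel, zpow_zero, RelIso.one_apply]

end Preorder

section ConditionallyCompleteLinearOrder

variable [ConditionallyCompleteLinearOrder α] {F : α ≃o α}

theorem strictMono_zpow_apply (hF : ∀ x, x < F x) (x : α) :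
    StrictMono fun n : ℤ => (F ^ n) x :=
  strictMono_int_of_lt_succ fun n => by
    rw [zpow_add_one_apply]
    exact hF _

theorem not_bddAbove_range_zpow_apply (hF : ∀ x, x < F x) (x : α) :
    ¬ BddAbove (range fun n : ℤ => (F ^ n) x) := by
  intro hbdd
  set S := range fun n : ℤ => (F ^ n) x
  have hS : F '' S = S := by
    rw [← range_comp]
    convert (Equiv.addRight (1 : ℤ)).surjective.range_comp (fun n : ℤ => (F ^ n) x) using 2
    ext n
    exact (zpow_add_one_apply F n x).symm
  have hfix := F.map_csSup' (range_nonempty _) hbdd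
  rw [hS] at hfix
  exact (hF _).ne' hfix

theorem exists_lt_zpow_apply (hF : ∀ x, x < F x) (x y : α) : ∃ n : ℤ, y < (F ^ n) x := by
  simpa using not_bddAbove_iff.1 (not_bddAbove_range_zpow_apply hF x) y

theorem exists_zpow_apply_lt (hF : ∀ x, x < F x) (x y : α) : ∃ n : ℤ, (F ^ n) x < y := by
  obtain ⟨n, hn⟩ := exists_lt_zpow_apply hF y x
  refine ⟨-n, ?_⟩
  simpa [zpow_neg_apply_zpow_apply] using (F ^ (-n)).strictMono hn

/-- When `x < F x` everywhere, the index `n` of the tile `[F ^ n c, F ^ (n + 1) c)` containing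
`x`. -/
noncomputable def orbitIndex (F : α ≃o α) (c x : α) : ℤ :=
  sSup {n : ℤ | (F ^ n) c ≤ x}

theorem bddAbove_setOf_zpow_apply_le (hF : ∀ x, x < F x) (c x : α) :
    BddAbove {n : ℤ | (F ^ n) c ≤ x} := by
  obtain ⟨N, hN⟩ := exists_lt_zpow_apply hF c x
  exact ⟨N, fun m hm => ((strictMono_zpow_apply hF c).lt_iff_lt.1 (hm.trans_lt hN)).le⟩

theorem le_orbitIndex (hF : ∀ x, x < F x) {c x : α} {n : ℤ} (hn : (F ^ n) c ≤ x) :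
    n ≤ orbitIndex F c x :=
  le_csSup (bddAbove_setOf_zpow_apply_le hF c x) hn

theorem orbitIndex_spec (hF : ∀ x, x < F x) (c x : α) :
    (F ^ orbitIndex F c x) c ≤ x ∧ x < (F ^ (orbitIndex F c x + 1)) c := by
  obtain ⟨M, hM⟩ := exists_zpow_apply_lt hF c x
  refine ⟨Int.csSup_mem ⟨M, hM.le⟩ (bddAbove_setOf_zpow_apply_le hF c x), lt_of_not_ge fun h => ?_⟩
  exact (lt_add_one _).not_ge (le_orbitIndex hF h)

theorem orbitIndex_eq_iff (hF : ∀ x, x < F x) {c x : α} {n : ℤ} :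
    orbitIndex F c x = n ↔ (F ^ n) c ≤ x ∧ x < (F ^ (n + 1)) c := by
  refine ⟨fun h => h ▸ orbitIndex_spec hF c x, fun ⟨h₁, h₂⟩ => ?_⟩
  refine le_antisymm ?_ (le_orbitIndex hF h₁)
  have := lt_of_le_of_lt (orbitIndex_spec hF c x).1 h₂
  exact Int.lt_add_one_iff.1 ((strictMono_zpow_apply hF c).lt_iff_lt.1 this)

theorem monotone_orbitIndex (hF : ∀ x, x < F x) (c : α) : Monotone (orbitIndex F c) :=
  fun _ _ hxy => le_orbitIndex hF ((orbitIndex_spec hF c _).1.trans hxy)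

theorem orbitIndex_zpow_apply (hF : ∀ x, x < F x) (c x : α) (m : ℤ) :
    orbitIndex F c ((F ^ m) x) = orbitIndex F c x + m := by
  obtain ⟨h₁, h₂⟩ := orbitIndex_spec hF c x
  rw [orbitIndex_eq_iff hF, add_comm _ m, add_assoc, zpow_add_apply, zpow_add_apply]
  exact ⟨(F ^ m).monotone h₁, (F ^ m).strictMono h₂⟩

end ConditionallyCompleteLinearOrder

section Conj

variable [ConditionallyCompleteLinearOrder α] [ConditionallyCompleteLinearOrder β]
  {F : α ≃o α} {G : β ≃o β}

noncomputable def orbitConj (F : α ≃o α) (G : β ≃o β) (θ : α ≃o β) (c x : α) : β :=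
  (G ^ orbitIndex F c x) (θ ((F ^ (-orbitIndex F c x)) x))

variable {θ : α ≃o β} {c : α}

theorem orbitIndex_orbitConj (hF : ∀ x, x < F x) (hG : ∀ y, y < G y) (hθ : θ (F c) = G (θ c))
    (x : α) : orbitIndex G (θ c) (orbitConj F G θ c x) = orbitIndex F c x := by
  set n := orbitIndex F c x
  have hw : orbitIndex F c ((F ^ (-n)) x) = 0 := by
    rw [orbitIndex_zpow_apply hF, add_neg_cancel]
  rw [orbitIndex_eq_iff hF, zpow_zero, zero_add, zpow_one, RelIso.one_apply] at hw
  have hθw : orbitIndex G (θ c) (θ ((F ^ (-n)) x)) = 0 := by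
    rw [orbitIndex_eq_iff hG, zpow_zero, zero_add, zpow_one, RelIso.one_apply, ← hθ]
    exact ⟨θ.monotone hw.1, θ.strictMono hw.2⟩
  rw [orbitConj, orbitIndex_zpow_apply hG, hθw, zero_add]

theorem orbitConj_orbitConj (hF : ∀ x, x < F x) (hG : ∀ y, y < G y) (hθ : θ (F c) = G (θ c))
    (x : α) : orbitConj G F θ.symm (θ c) (orbitConj F G θ c x) = x := by
  rw [orbitConj, orbitIndex_orbitConj hF hG hθ, orbitConj, zpow_neg_apply_zpow_apply,
    symm_apply_apply, ← zpow_add_apply, add_neg_cancel, zpow_zero, RelIso.one_apply]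

theorem monotone_orbitConj (hF : ∀ x, x < F x) (hG : ∀ y, y < G y) (hθ : θ (F c) = G (θ c)) :
    Monotone (orbitConj F G θ c) := by
  intro x y hxy
  rcases (monotone_orbitIndex hF c hxy).eq_or_lt with h | h
  · rw [orbitConj, orbitConj, h]
    exact (G ^ _).monotone (θ.monotone ((F ^ _).monotone hxy))
  · rw [← orbitIndex_orbitConj hF hG hθ, ← orbitIndex_orbitConj hF hG hθ] at h
    exact ((monotone_orbitIndex hG _).reflect_lt h).le

theorem semiconj_orbitConj (hF : ∀ x, x < F x) : Function.Semiconj (orbitConj F G θ c) F G := by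
  intro x
  have hidx : orbitIndex F c (F x) = orbitIndex F c x + 1 := by
    simpa using orbitIndex_zpow_apply hF c x 1
  rw [orbitConj, orbitConj, hidx, zpow_add_one_apply, neg_add, zpow_add_apply, zpow_neg_one,
    RelIso.inv_apply_self]

theorem exists_semiconj_of_lt_apply (hF : ∀ x, x < F x) (hG : ∀ y, y < G y) (θ : α ≃o β)
    (c : α) (hθ : θ (F c) = G (θ c)) : ∃ e : α ≃o β, Function.Semiconj e F G := by
  have hθ' : θ.symm (G (θ c)) = F (θ.symm (θ c)) := by
    rw [← hθ, symm_apply_apply, symm_apply_apply]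
  have hleft := orbitConj_orbitConj hF hG hθ
  have hright := orbitConj_orbitConj hG hF hθ'
  simp only [symm_symm, symm_apply_apply] at hright
  let e : α ≃ β := ⟨orbitConj F G θ c, orbitConj G F θ.symm (θ c), hleft, hright⟩
  exact ⟨e.toOrderIso (monotone_orbitConj hF hG hθ) (monotone_orbitConj hG hF hθ'),
    semiconj_orbitConj hF⟩

end Conj

end OrderIso

theorem Real.exists_semiconj_of_lt_apply {F G : ℝ ≃o ℝ} (hF : ∀ x, x < F x)
    (hG : ∀ x, x < G x) : ∃ e : ℝ ≃o ℝ, Function.Semiconj e F G := by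
  refine OrderIso.exists_semiconj_of_lt_apply hF hG
    (OrderIso.mulLeft₀ (G 0 / F 0) (div_pos (hG 0) (hF 0))) 0 ?_
  simp [(hF 0).ne']

theorem OrderIso.exists_semiconj_of_lt_apply_of_orderIso_real {α β : Type*} [Preorder α]
    [Preorder β] (φ : α ≃o ℝ) (ψ : β ≃o ℝ) {F : α ≃o α} {G : β ≃o β} (hF : ∀ x, x < F x)
    (hG : ∀ y, y < G y) : ∃ e : α ≃o β, Function.Semiconj e F G := by
  obtain ⟨e, he⟩ := Real.exists_semiconj_of_lt_apply (F := φ.symm.trans (F.trans φ))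
    (G := ψ.symm.trans (G.trans ψ)) (fun t => by simpa using φ.strictMono (hF (φ.symm t)))
    (fun t => by simpa using ψ.strictMono (hG (ψ.symm t)))
  refine ⟨φ.trans (e.trans ψ.symm), fun x => ?_⟩
  simpa using congrArg ψ.symm (he (φ x))

theorem Real.nonempty_orderIso_Ioo {a b : ℝ} (hab : a < b) : Nonempty (Ioo a b ≃o ℝ) := by
  have hba : b - a ≠ 0 := (sub_pos.2 hab).ne'
  let e : ℝ ≃o ℝ := (OrderIso.addRight (-(a + b) / 2)).trans
    (OrderIso.mulLeft₀ (2 / (b - a)) (div_pos two_pos (sub_pos.2 hab)))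
  have he : e '' Ioo a b = Ioo (-1) 1 := by
    rw [e.image_Ioo]
    congr 1 <;> simp only [e, OrderIso.trans_apply, OrderIso.addRight_apply,
      OrderIso.mulLeft₀_apply] <;> field_simp <;> ring
  exact ⟨((e.strictMono.strictMonoOn _).orderIso e _).trans
    ((OrderIso.setCongr _ _ he).trans (orderIsoIooNegOneOne ℝ).symm)⟩

section Interval

variable {α β : Type*}

theorem MonotoneOn.apply_left_eq_of_surjOn [PartialOrder α] {f : α → α} {a b : α}
    (hf : MonotoneOn f (Icc a b))
    (hmaps : MapsTo f (Icc a b) (Icc a b)) (hsurj : SurjOn f (Icc a b) (Icc a b)) (hab : a ≤ b) :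
    f a = a := by
  obtain ⟨y, hy, hfy⟩ := hsurj (left_mem_Icc.2 hab)
  exact le_antisymm ((hf (left_mem_Icc.2 hab) hy hy.1).trans hfy.le) (hmaps (left_mem_Icc.2 hab)).1

theorem MonotoneOn.apply_right_eq_of_surjOn [PartialOrder α] {f : α → α} {a b : α}
    (hf : MonotoneOn f (Icc a b))
    (hmaps : MapsTo f (Icc a b) (Icc a b)) (hsurj : SurjOn f (Icc a b) (Icc a b)) (hab : a ≤ b) :
    f b = b := by
  obtain ⟨y, hy, hfy⟩ := hsurj (right_mem_Icc.2 hab)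
  exact le_antisymm (hmaps (right_mem_Icc.2 hab)).2
    (hfy.ge.trans (hf hy (right_mem_Icc.2 hab) hy.2))

variable [LinearOrder α] [LinearOrder β]

theorem StrictMonoOn.exists_orderIso_Ioo {f : α → α} {a b : α} (hf : StrictMonoOn f (Icc a b))
    (hbij : BijOn f (Icc a b) (Icc a b)) (hab : a ≤ b) :
    ∃ F : Ioo a b ≃o Ioo a b, ∀ x, (F x : α) = f x := by
  have ha := hf.monotoneOn.apply_left_eq_of_surjOn hbij.mapsTo hbij.surjOn hab
  have hb := hf.monotoneOn.apply_right_eq_of_surjOn hbij.mapsTo hbij.surjOn hab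
  have hmaps : MapsTo f (Ioo a b) (Ioo a b) := fun x hx =>
    ⟨ha ▸ hf (left_mem_Icc.2 hab) (Ioo_subset_Icc_self hx) hx.1,
      hb ▸ hf (Ioo_subset_Icc_self hx) (right_mem_Icc.2 hab) hx.2⟩
  have hsurj : Function.Surjective (hmaps.restrict f _ _) := by
    rintro ⟨y, hy⟩
    obtain ⟨x, hx, rfl⟩ := hbij.surjOn (Ioo_subset_Icc_self hy)
    rcases eq_endpoints_or_mem_Ioo_of_mem_Icc hx with rfl | rfl | hx
    · exact absurd ha hy.1.ne'
    · exact absurd hb hy.2.ne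
    · exact ⟨⟨x, hx⟩, rfl⟩
  exact ⟨StrictMono.orderIsoOfSurjective _ (fun x y hxy => hf (Ioo_subset_Icc_self x.2)
    (Ioo_subset_Icc_self y.2) hxy) hsurj, fun _ => rfl⟩

theorem OrderIso.exists_extend_Icc {a b : α} {A B : β} (hab : a < b) (hAB : A < B)
    (e : Ioo a b ≃o Ioo A B) :
    ∃ h : α → β, StrictMonoOn h (Icc a b) ∧ BijOn h (Icc a b) (Icc A B) ∧ h a = A ∧ h b = B ∧
      ∀ x : Ioo a b, h x = e x := by
  classical
  let h : α → β := fun x => if hx : x ∈ Ioo a b then e ⟨x, hx⟩ else if x ≤ a then A else B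
  have ha : h a = A := by simp [h]
  have hb : h b = B := by simp [h, hab.not_ge]
  have he (x : Ioo a b) : h x = e x := dif_pos x.2
  have hmono : StrictMonoOn h (Icc a b) := by
    intro x hx y hy hxy
    rcases eq_endpoints_or_mem_Ioo_of_mem_Icc hx with rfl | rfl | hx'
    · rcases eq_endpoints_or_mem_Ioo_of_mem_Icc hy with rfl | rfl | hy'
      · exact absurd hxy (lt_irrefl _)
      · rwa [ha, hb]
      · rw [ha, he ⟨y, hy'⟩]; exact (e _).2.1
    · exact absurd hy.2 hxy.not_ge
    · rcases eq_endpoints_or_mem_Ioo_of_mem_Icc hy with rfl | rfl | hy'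
      · exact absurd hx.1 hxy.not_ge
      · rw [hb, he ⟨x, hx'⟩]; exact (e _).2.2
      · rw [he ⟨x, hx'⟩, he ⟨y, hy'⟩]
        exact e.strictMono (show (⟨x, hx'⟩ : Ioo a b) < ⟨y, hy'⟩ from hxy)
  have hmaps : MapsTo h (Icc a b) (Icc A B) := by
    intro x hx
    rcases eq_endpoints_or_mem_Ioo_of_mem_Icc hx with rfl | rfl | hx'
    · rw [ha]; exact left_mem_Icc.2 hAB.le
    · rw [hb]; exact right_mem_Icc.2 hAB.le
    · rw [he ⟨x, hx'⟩]; exact Ioo_subset_Icc_self (e _).2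
  have hsurj : SurjOn h (Icc a b) (Icc A B) := by
    intro y hy
    rcases eq_endpoints_or_mem_Ioo_of_mem_Icc hy with rfl | rfl | hy'
    · exact ⟨a, left_mem_Icc.2 hab.le, ha⟩
    · exact ⟨b, right_mem_Icc.2 hab.le, hb⟩
    · refine ⟨e.symm ⟨y, hy'⟩, Ioo_subset_Icc_self (e.symm _).2, ?_⟩
      rw [he, apply_symm_apply]
  exact ⟨h, hmono, ⟨hmaps, hmono.injOn, hsurj⟩, ha, hb, he⟩

theorem StrictMonoOn.continuousOn_of_bijOn [TopologicalSpace α] [OrderTopology α]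
    [TopologicalSpace β] [OrderTopology β] {h : α → β} {s : Set α} {t : Set β}
    [OrdConnected s] [OrdConnected t] (hh : StrictMonoOn h s) (hbij : BijOn h s t) :
    ContinuousOn h s := by
  let e : s ≃o t := (hh.orderIso h s).trans (OrderIso.setCongr _ _ hbij.image_eq)
  exact continuousOn_iff_continuous_domRestrict.2 (continuous_subtype_val.comp e.continuous)

end Interval

theorem stmt_4_general
    (f g : ℝ → ℝ) (xL xR xbL xbR : ℝ)
    (hI : xL < xR) (hJ : xbL < xbR)
    (hgm : StrictMonoOn g (Icc xL xR))
    (hgB : BijOn g (Icc xL xR) (Icc xL xR))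
    (hfm : StrictMonoOn f (Icc xbL xbR))
    (hfB : BijOn f (Icc xbL xbR) (Icc xbL xbR))
    (hgd : ∀ x ∈ Ioo xL xR, x < g x)
    (hfd : ∀ x ∈ Ioo xbL xbR, x < f x) :
    ∃ h : ℝ → ℝ, ContinuousOn h (Icc xbL xbR) ∧ StrictMonoOn h (Icc xbL xbR) ∧
      BijOn h (Icc xbL xbR) (Icc xL xR) ∧
      ∀ x ∈ Icc xbL xbR, g (h x) = h (f x) := by
  obtain ⟨F, hF⟩ := hfm.exists_orderIso_Ioo hfB hJ.le
  obtain ⟨G, hG⟩ := hgm.exists_orderIso_Ioo hgB hI.le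
  obtain ⟨φ⟩ := Real.nonempty_orderIso_Ioo hJ
  obtain ⟨ψ⟩ := Real.nonempty_orderIso_Ioo hI
  obtain ⟨e, he⟩ := OrderIso.exists_semiconj_of_lt_apply_of_orderIso_real φ ψ (F := F) (G := G)
    (fun x => by simpa [← Subtype.coe_lt_coe, hF] using hfd x x.2)
    (fun y => by simpa [← Subtype.coe_lt_coe, hG] using hgd y y.2)
  obtain ⟨h, hmono, hbij, ha, hb, hext⟩ := e.exists_extend_Icc hJ hI
  refine ⟨h, hmono.continuousOn_of_bijOn hbij, hmono, hbij, fun x hx => ?_⟩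
  rcases eq_endpoints_or_mem_Ioo_of_mem_Icc hx with rfl | rfl | hx
  · rw [hfm.monotoneOn.apply_left_eq_of_surjOn hfB.mapsTo hfB.surjOn hJ.le, ha,
      hgm.monotoneOn.apply_left_eq_of_surjOn hgB.mapsTo hgB.surjOn hI.le]
  · rw [hfm.monotoneOn.apply_right_eq_of_surjOn hfB.mapsTo hfB.surjOn hJ.le, hb,
      hgm.monotoneOn.apply_right_eq_of_surjOn hgB.mapsTo hgB.surjOn hI.le]
  · rw [hext ⟨x, hx⟩, ← hF ⟨x, hx⟩, hext, he.eq, hG]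

/-- increasing homeomorphisms of compact intervals fixing exactly the
two endpoints and lying strictly above the diagonal in the interior are conjugate
by an increasing homeomorphism. -/
theorem stmt_4
    (f g : ℝ → ℝ) (xL xR xbL xbR : ℝ)
    (hI : xL < xR) (hJ : xbL < xbR)
    (hgc : ContinuousOn g (Icc xL xR)) (hgm : StrictMonoOn g (Icc xL xR))
    (hgB : BijOn g (Icc xL xR) (Icc xL xR))
    (hfc : ContinuousOn f (Icc xbL xbR)) (hfm : StrictMonoOn f (Icc xbL xbR))
    (hfB : BijOn f (Icc xbL xbR) (Icc xbL xbR))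
    (hgd : ∀ x ∈ Ioo xL xR, x < g x)
    (hfd : ∀ x ∈ Ioo xbL xbR, x < f x)
    (hgfix : ∀ x ∈ Icc xL xR, g x = x ↔ x = xL ∨ x = xR)
    (hffix : ∀ x ∈ Icc xbL xbR, f x = x ↔ x = xbL ∨ x = xbR) :
    ∃ h : ℝ → ℝ, ContinuousOn h (Icc xbL xbR) ∧ StrictMonoOn h (Icc xbL xbR) ∧
      BijOn h (Icc xbL xbR) (Icc xL xR) ∧
      ∀ x ∈ Icc xbL xbR, g (h x) = h (f x) :=
  stmt_4_general f g xL xR xbL xbR hI hJ hgm hgB hfm hfB hgd hfd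
end

section
/- Two increasing homeomorphisms of the real line (or of compact intervals onto themselves) with finitely many fixed points are topologically conjugate if and only if they have the same number of fixed points with the same sequence of stabilities (semi-attracting/semi-repelling from each side) or with the reversed sequence of stabilities. -/
/-!
An increasing homeomorphism `e` of `ℝ` maps each component `I` of the complement of its fixed
point set onto itself and moves all points of `I` to the same side. On such an interval `e` is
conjugate to a translation: `I` is the disjoint union of the fundamental domains
`[eⁿ x₀, eⁿ⁺¹ x₀)`, and an increasing bijection `h₀ : [x₀, e x₀) → [y₀, e' y₀)` extends to the
conjugacy `e'ⁿ h₀ e⁻ⁿ` on the `n`-th domain. A sign-matching increasing bijection `φ` sends fixed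
points to fixed points and components to components with the same direction of motion, so `φ` on
the fixed points together with these local conjugacies is a global conjugacy. The decreasing
case reduces to the increasing one by conjugating `g` with `x ↦ -x`. Conversely, a conjugacy is
strictly monotone or antitone and transports the sign of `f x - x`.
-/

open Set Filter Topology Function

section Orbits

variable {α : Type*} [ConditionallyCompleteLinearOrder α] [TopologicalSpace α] [OrderTopology α]

theorem exists_isFixedPt_of_monotone_orbit {F : α → α} (hF : Continuous F) {u : ℕ → α}
    (hu : ∀ n, u (n + 1) = F (u n)) (hmono : Monotone u) {b : α} (hb : ∀ n, u n ≤ b) :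
    ∃ L ∈ Icc (u 0) b, IsFixedPt F L := by
  have hbdd : BddAbove (range u) := ⟨b, by rintro _ ⟨n, rfl⟩; exact hb n⟩
  have hlim : Tendsto u atTop (𝓝 (⨆ n, u n)) := tendsto_atTop_ciSup hmono hbdd
  have hlim_succ : Tendsto (fun n => u (n + 1)) atTop (𝓝 (F (⨆ n, u n))) := by
    simpa only [hu, Function.comp_def] using (hF.tendsto _).comp hlim
  exact ⟨⨆ n, u n, ⟨le_ciSup hbdd 0, ciSup_le hb⟩,
    tendsto_nhds_unique hlim_succ ((tendsto_add_atTop_iff_nat 1).2 hlim)⟩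

end Orbits

section IntervalBlocks

variable {β : Type*} [LinearOrder β] {u : ℤ → β} {x y : β} {m n : ℤ}

theorem Monotone.exists_mem_Ico_add_one (hu : Monotone u) {a b : ℤ} (ha : u a ≤ x)
    (hb : x < u b) : ∃ n, x ∈ Ico (u n) (u (n + 1)) := by
  obtain ⟨n, hn, hmax⟩ := Int.exists_greatest_of_bdd (P := fun n => u n ≤ x)
    ⟨b, fun z hz => le_of_not_gt fun hbz => (hb.trans_le ((hu hbz.le).trans hz)).false⟩ ⟨a, ha⟩
  exact ⟨n, hn, lt_of_not_ge fun h => by linarith [hmax (n + 1) h]⟩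

theorem Monotone.lt_of_mem_Ico_add_one (hu : Monotone u) (hx : x ∈ Ico (u m) (u (m + 1)))
    (hy : y ∈ Ico (u n) (u (n + 1))) (hmn : m < n) : x < y :=
  hx.2.trans_le ((hu (Int.add_one_le_of_lt hmn)).trans hy.1)

theorem Monotone.le_of_mem_Ico_add_one (hu : Monotone u) (hx : x ∈ Ico (u m) (u (m + 1)))
    (hy : y ∈ Ico (u n) (u (n + 1))) (hxy : x ≤ y) : m ≤ n :=
  le_of_not_gt fun hnm => (hu.lt_of_mem_Ico_add_one hy hx hnm).not_ge hxy

end IntervalBlocks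

theorem OrderIso.zpow_add_one_apply_s7 {α : Type*} [LE α] (e : α ≃o α) (n : ℤ) (x : α) :
    (e ^ (n + 1)) x = e ((e ^ n) x) := by
  rw [← mul_self_zpow, RelIso.mul_apply]

structure MovesRightOn {α : Type*} [LinearOrder α] (e : α ≃o α) (I : Set α) : Prop where
  ordConnected : I.OrdConnected
  mapsTo : MapsTo e I I
  mapsTo_inv : MapsTo ⇑e⁻¹ I I
  lt_apply : ∀ x ∈ I, x < e x

namespace MovesRightOn

variable {α : Type*} [LinearOrder α] {e : α ≃o α} {I : Set α} {x₀ x : α}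

theorem mapsTo_zpow (hI : MovesRightOn e I) (n : ℤ) : MapsTo ⇑(e ^ n) I I := by
  induction n using Int.induction_on with
  | zero => simpa using mapsTo_id I
  | succ n ih => rw [zpow_add_one, RelIso.coe_mul]; exact ih.comp hI.mapsTo
  | pred n ih => rw [zpow_sub_one, RelIso.coe_mul]; exact ih.comp hI.mapsTo_inv

theorem strictMono_zpow_apply (hI : MovesRightOn e I) (hx₀ : x₀ ∈ I) :
    StrictMono fun n : ℤ => (e ^ n) x₀ :=
  strictMono_int_of_lt_succ fun n => by
    rw [OrderIso.zpow_add_one_apply_s7]; exact hI.lt_apply _ (hI.mapsTo_zpow n hx₀)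

theorem Ico_zpow_apply_subset (hI : MovesRightOn e I) (hx₀ : x₀ ∈ I) (n : ℤ) :
    Ico ((e ^ n) x₀) ((e ^ (n + 1)) x₀) ⊆ I :=
  Ico_subset_Icc_self.trans <|
    hI.ordConnected.out (hI.mapsTo_zpow n hx₀) (hI.mapsTo_zpow (n + 1) hx₀)

end MovesRightOn

namespace MovesRightOn

variable {α : Type*} [ConditionallyCompleteLinearOrder α] [TopologicalSpace α] [OrderTopology α]
  {e : α ≃o α} {I : Set α} {x₀ x : α}

theorem exists_le_pow_apply (hI : MovesRightOn e I) (hx₀ : x₀ ∈ I) (hx : x ∈ I) :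
    ∃ n : ℕ, x ≤ (e ^ n) x₀ := by
  by_contra! h
  have hmem : ∀ n : ℕ, (e ^ n) x₀ ∈ I := fun n => by simpa using hI.mapsTo_zpow n hx₀
  have hstep : ∀ n : ℕ, (e ^ (n + 1)) x₀ = e ((e ^ n) x₀) := fun n => by
    rw [pow_succ', RelIso.mul_apply]
  obtain ⟨L, hL, hfix⟩ := exists_isFixedPt_of_monotone_orbit e.continuous hstep
    (monotone_nat_of_le_succ fun n => (hstep n).symm ▸ (hI.lt_apply _ (hmem n)).le)
    fun n => (h n).le
  exact (hI.lt_apply L (hI.ordConnected.out hx₀ hx (by simpa using hL))).ne' hfix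

theorem exists_mem_Ico_zpow_apply (hI : MovesRightOn e I) (hx₀ : x₀ ∈ I) (hx : x ∈ I) :
    ∃ n : ℤ, x ∈ Ico ((e ^ n) x₀) ((e ^ (n + 1)) x₀) := by
  obtain ⟨a, ha⟩ := hI.exists_le_pow_apply hx hx₀
  obtain ⟨b, hb⟩ := hI.exists_le_pow_apply hx₀ hx
  refine (hI.strictMono_zpow_apply hx₀).monotone.exists_mem_Ico_add_one (a := -a) (b := b + 1)
    ?_ (hb.trans_lt ?_)
  · simpa [zpow_neg] using (e ^ (a : ℤ))⁻¹.monotone ha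
  · simpa using (hI.strictMono_zpow_apply hx₀) (lt_add_one (b : ℤ))

end MovesRightOn

theorem exists_orderIso_apply_eq_apply_eq {a b c d : ℝ} (hab : a < b) (hcd : c < d) :
    ∃ φ : ℝ ≃o ℝ, φ a = c ∧ φ b = d := by
  have hk : 0 < (d - c) / (b - a) := div_pos (sub_pos.2 hcd) (sub_pos.2 hab)
  refine ⟨((OrderIso.addRight (-a)).trans (OrderIso.mulRight₀ _ hk)).trans (OrderIso.addRight c),
    by simp, ?_⟩
  simp only [OrderIso.trans_apply, OrderIso.addRight_apply, OrderIso.mulRight₀_apply]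
  field_simp [(sub_pos.2 hab).ne']
  ring

structure IsMonoConjOn {α β : Type*} [Preorder α] [Preorder β] (h : α → β) (f : α → α)
    (g : β → β) (S : Set α) (T : Set β) : Prop where
  strictMonoOn : StrictMonoOn h S
  mapsTo : MapsTo h S T
  surjOn : SurjOn h S T
  semiconj : ∀ x ∈ S, h (f x) = g (h x)

theorem IsMonoConjOn.of_inv {α β : Type*} [Preorder α] [Preorder β] {h : α → β}
    {e : α ≃o α} {e' : β ≃o β} {S : Set α} {T : Set β} (hh : IsMonoConjOn h ⇑e⁻¹ ⇑e'⁻¹ S T)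
    (he : MapsTo e S S) : IsMonoConjOn h e e' S T where
  strictMonoOn := hh.strictMonoOn
  mapsTo := hh.mapsTo
  surjOn := hh.surjOn
  semiconj x hx := by
    have := hh.semiconj (e x) (he hx)
    rw [RelIso.inv_apply_self] at this
    rw [this, RelIso.apply_inv_self]

theorem mem_Ico_zpow_apply_iff {α : Type*} [LinearOrder α] {e e' h₀ : α ≃o α} {x₀ y₀ : α}
    (h₀x₀ : h₀ x₀ = y₀) (h₀e : h₀ (e x₀) = e' y₀) (n : ℤ) (x : α) :
    x ∈ Ico ((e ^ n) x₀) ((e ^ (n + 1)) x₀) ↔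
      (e' ^ n * h₀ * e ^ (-n)) x ∈ Ico ((e' ^ n) y₀) ((e' ^ (n + 1)) y₀) := by
  have hk : ∀ t, (e' ^ n * h₀ * e ^ (-n)) ((e ^ n) t) = (e' ^ n) (h₀ t) := fun t => by
    simp [zpow_neg, RelIso.mul_apply]
  rw [zpow_add_one e', RelIso.mul_apply, ← h₀e, ← h₀x₀, ← hk x₀, ← hk (e x₀),
    ← RelIso.mul_apply (e ^ n) e, ← zpow_add_one]
  simp only [mem_Ico, OrderIso.le_iff_le, OrderIso.lt_iff_lt]

theorem MovesRightOn.exists_isMonoConjOn {e e' : ℝ ≃o ℝ} {I J : Set ℝ} (hI : MovesRightOn e I)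
    (hJ : MovesRightOn e' J) (hI₀ : I.Nonempty) (hJ₀ : J.Nonempty) :
    ∃ h, IsMonoConjOn h e e' I J := by
  obtain ⟨x₀, hx₀⟩ := hI₀
  obtain ⟨y₀, hy₀⟩ := hJ₀
  obtain ⟨h₀, h₀x₀, h₀e⟩ :=
    exists_orderIso_apply_eq_apply_eq (hI.lt_apply x₀ hx₀) (hJ.lt_apply y₀ hy₀)
  set k : ℤ → ℝ ≃o ℝ := fun n => e' ^ n * h₀ * e ^ (-n) with hk_def
  have hu := (hI.strictMono_zpow_apply hx₀).monotone
  have hu' := (hJ.strictMono_zpow_apply hy₀).monotone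
  -- `x ∈ I` lies in the `τ x`-th fundamental domain, on which the conjugacy is `k (τ x)`
  choose! τ hτ using fun x (hx : x ∈ I) => hI.exists_mem_Ico_zpow_apply hx₀ hx
  have hτ_eq : ∀ x ∈ I, ∀ n, x ∈ Ico ((e ^ n) x₀) ((e ^ (n + 1)) x₀) → τ x = n :=
    fun x hx n hn => le_antisymm (hu.le_of_mem_Ico_add_one (hτ x hx) hn le_rfl)
      (hu.le_of_mem_Ico_add_one hn (hτ x hx) le_rfl)
  have hkτ : ∀ x ∈ I, k (τ x) x ∈ Ico ((e' ^ τ x) y₀) ((e' ^ (τ x + 1)) y₀) := fun x hx =>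
    (mem_Ico_zpow_apply_iff h₀x₀ h₀e _ x).1 (hτ x hx)
  refine ⟨fun x => k (τ x) x, ⟨?_, ?_, ?_, ?_⟩⟩
  · intro x hx y hy hxy
    obtain hτxy | hτxy := (hu.le_of_mem_Ico_add_one (hτ x hx) (hτ y hy) hxy.le).eq_or_lt
    · simp only [hτxy]
      exact (k _).strictMono hxy
    · exact hu'.lt_of_mem_Ico_add_one (hkτ x hx) (hkτ y hy) hτxy
  · exact fun x hx => hJ.Ico_zpow_apply_subset hy₀ _ (hkτ x hx)
  · intro v hv
    obtain ⟨n, hn⟩ := hJ.exists_mem_Ico_zpow_apply hy₀ hv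
    have hmem := (mem_Ico_zpow_apply_iff h₀x₀ h₀e n ((k n)⁻¹ v)).2 (by rwa [RelIso.apply_inv_self])
    have hmemI := hI.Ico_zpow_apply_subset hx₀ n hmem
    exact ⟨_, hmemI, by simp only [hτ_eq _ hmemI n hmem, RelIso.apply_inv_self]⟩
  · intro x hx
    have hτe : τ (e x) = τ x + 1 := hτ_eq _ (hI.mapsTo hx) _ <| by
      simpa only [mem_Ico, OrderIso.zpow_add_one_apply_s7, e.le_iff_le, e.lt_iff_lt] using hτ x hx
    have hconj : k (τ x + 1) * e = e' * k (τ x) := by simp only [hk_def]; group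
    simp only [hτe]
    exact DFunLike.congr_fun hconj x

section FixedPoints

variable {α : Type*} [LinearOrder α] {x : α}

theorem StrictMono.uIcc_apply_subset_compl_fixedPoints {f : α → α} (hf : StrictMono f)
    (hx : f x ≠ x) : uIcc x (f x) ⊆ (fixedPoints f)ᶜ := by
  intro t ht (htf : f t = t)
  have htx : t ≠ x := by rintro rfl; exact hx htf
  rcases mem_uIcc.1 ht with ⟨hxt, htfx⟩ | ⟨hfxt, htx'⟩
  · have := hf (lt_of_le_of_ne hxt htx.symm)
    rw [htf] at this
    exact this.not_ge htfx
  · have := hf (lt_of_le_of_ne htx' htx)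
    rw [htf] at this
    exact this.not_ge hfxt

theorem OrderIso.fixedPoints_inv (e : α ≃o α) : fixedPoints ⇑e⁻¹ = fixedPoints e := by
  ext x
  exact e.symm_apply_eq.trans eq_comm

end FixedPoints

section Components

variable {α : Type*} [LinearOrder α] [TopologicalSpace α] [OrderClosedTopology α]
  {s : Set α} {x z a : α}

theorem lt_of_mem_connectedComponentIn_of_notMem (hz : z ∈ connectedComponentIn s x)
    (ha : a ∉ s) (hxa : x < a) : z < a := by
  have hx : x ∈ connectedComponentIn s x :=
    mem_connectedComponentIn (connectedComponentIn_nonempty_iff.1 ⟨z, hz⟩)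
  by_contra! haz
  exact ha (connectedComponentIn_subset _ _
    (isPreconnected_connectedComponentIn.Icc_subset hx hz ⟨hxa.le, haz⟩))

theorem lt_of_mem_connectedComponentIn_of_notMem' (hz : z ∈ connectedComponentIn s x)
    (ha : a ∉ s) (hax : a < x) : a < z := by
  have hx : x ∈ connectedComponentIn s x :=
    mem_connectedComponentIn (connectedComponentIn_nonempty_iff.1 ⟨z, hz⟩)
  by_contra! hza
  exact ha (connectedComponentIn_subset _ _
    (isPreconnected_connectedComponentIn.Icc_subset hz hx ⟨hza, hax.le⟩))

theorem lt_apply_of_mem_connectedComponentIn {f : α → α} (hf : Continuous f)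
    (hz : z ∈ connectedComponentIn (fixedPoints f)ᶜ x) (hx : x < f x) : z < f z := by
  by_contra! hzf
  obtain ⟨t, ht, htf⟩ := isPreconnected_connectedComponentIn.intermediate_value₂
    (mem_connectedComponentIn hx.ne') hz continuousOn_id hf.continuousOn hx.le hzf
  exact connectedComponentIn_subset _ _ ht htf.symm

end Components

section FixedPointComponents

variable {α : Type*} [ConditionallyCompleteLinearOrder α] [DenselyOrdered α]
  [TopologicalSpace α] [OrderTopology α] {s : Set α} {x y : α}

theorem exists_notMem_Icc_of_notMem_connectedComponentIn (hxy : x ≤ y)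
    (hy : y ∉ connectedComponentIn s x) : ∃ a ∈ Icc x y, a ∉ s := by
  by_contra! h
  exact hy (isPreconnected_Icc.subset_connectedComponentIn (left_mem_Icc.2 hxy) h
    (right_mem_Icc.2 hxy))

theorem StrictMono.apply_mem_connectedComponentIn {f : α → α} (hf : StrictMono f)
    (hx : f x ≠ x) : f x ∈ connectedComponentIn (fixedPoints f)ᶜ x :=
  isPreconnected_uIcc.subset_connectedComponentIn left_mem_uIcc
    (hf.uIcc_apply_subset_compl_fixedPoints hx) right_mem_uIcc

namespace OrderIso

variable (e : α ≃o α)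

theorem mapsTo_connectedComponentIn_fixedPoints (x : α) :
    MapsTo e (connectedComponentIn (fixedPoints e)ᶜ x) (connectedComponentIn (fixedPoints e)ᶜ x) :=
  fun y hy => by
    rw [connectedComponentIn_eq hy]
    exact e.strictMono.apply_mem_connectedComponentIn (connectedComponentIn_subset _ _ hy)

theorem mapsTo_inv_connectedComponentIn_fixedPoints (x : α) :
    MapsTo ⇑e⁻¹ (connectedComponentIn (fixedPoints e)ᶜ x)
      (connectedComponentIn (fixedPoints e)ᶜ x) := fun y hy => by
  have hy' : e y ≠ y := connectedComponentIn_subset _ _ hy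
  have hz : e (e⁻¹ y) ≠ e⁻¹ y := fun h => hy' (by simpa using congrArg e h)
  have hyz : y ∈ connectedComponentIn (fixedPoints e)ᶜ (e⁻¹ y) := by
    simpa using e.strictMono.apply_mem_connectedComponentIn hz
  rw [connectedComponentIn_eq hy, ← connectedComponentIn_eq hyz]
  exact mem_connectedComponentIn hz

theorem movesRightOn_connectedComponentIn (hx : x < e x) :
    MovesRightOn e (connectedComponentIn (fixedPoints e)ᶜ x) where
  ordConnected := isPreconnected_connectedComponentIn.ordConnected
  mapsTo := e.mapsTo_connectedComponentIn_fixedPoints x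
  mapsTo_inv := e.mapsTo_inv_connectedComponentIn_fixedPoints x
  lt_apply _ hy := lt_apply_of_mem_connectedComponentIn e.continuous hy hx

theorem movesRightOn_inv_connectedComponentIn (hx : e x < x) :
    MovesRightOn e⁻¹ (connectedComponentIn (fixedPoints e)ᶜ x) := by
  have hx' : x < e⁻¹ x := by simpa using e⁻¹.strictMono hx
  simpa [OrderIso.fixedPoints_inv] using e⁻¹.movesRightOn_connectedComponentIn hx'

end OrderIso

end FixedPointComponents

theorem eq_iff_eq_of_lt_iff_lt {α : Type*} [LinearOrder α] {a b c d : α} (h₁ : a < b ↔ c < d)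
    (h₂ : b < a ↔ d < c) : b = a ↔ d = c := by
  rw [← not_iff_not]
  simp only [← ne_eq, ne_iff_lt_or_gt, h₁, h₂]

theorem exists_isMonoConjOn_connectedComponentIn (e e' : ℝ ≃o ℝ) {x y : ℝ} (hx : e x ≠ x)
    (hy : e' y ≠ y) (hsign : x < e x ↔ y < e' y) :
    ∃ h, IsMonoConjOn h e e' (connectedComponentIn (fixedPoints e)ᶜ x)
      (connectedComponentIn (fixedPoints e')ᶜ y) := by
  have hI₀ : (connectedComponentIn (fixedPoints e)ᶜ x).Nonempty :=
    ⟨x, mem_connectedComponentIn hx⟩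
  have hJ₀ : (connectedComponentIn (fixedPoints e')ᶜ y).Nonempty :=
    ⟨y, mem_connectedComponentIn hy⟩
  rcases hx.lt_or_gt with hlt | hgt
  · have hlt' : e' y < y := hy.lt_or_gt.resolve_right (mt hsign.2 hlt.not_gt)
    obtain ⟨h, hh⟩ := (e.movesRightOn_inv_connectedComponentIn hlt).exists_isMonoConjOn
      (e'.movesRightOn_inv_connectedComponentIn hlt') hI₀ hJ₀
    exact ⟨h, hh.of_inv (e.mapsTo_connectedComponentIn_fixedPoints x)⟩
  · exact (e.movesRightOn_connectedComponentIn hgt).exists_isMonoConjOn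
      (e'.movesRightOn_connectedComponentIn (hsign.1 hgt)) hI₀ hJ₀

section Gluing

variable (f g φ : ℝ ≃o ℝ)

/-- The predicate depends on `x` only through its component (and that of `φ x`), so the same
conjugacy is chosen at all points of a component. -/
noncomputable def localConj (x : ℝ) : ℝ → ℝ :=
  Classical.epsilon fun h => IsMonoConjOn h f g (connectedComponentIn (fixedPoints f)ᶜ x)
    (connectedComponentIn (fixedPoints g)ᶜ (φ x))

noncomputable def gluedConj (x : ℝ) : ℝ :=
  if f x = x then φ x else localConj f g φ x x

variable {f g φ} {x y a : ℝ}

theorem mapsTo_connectedComponentIn_of_isFixedPt_iff (hfix : ∀ x, f x = x ↔ g (φ x) = φ x)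
    (x : ℝ) : MapsTo φ (connectedComponentIn (fixedPoints f)ᶜ x)
      (connectedComponentIn (fixedPoints g)ᶜ (φ x)) := fun y hy => by
  have hx : f x ≠ x := connectedComponentIn_nonempty_iff.1 ⟨y, hy⟩
  refine (isPreconnected_connectedComponentIn.image φ φ.continuous.continuousOn)
    |>.subset_connectedComponentIn ⟨x, mem_connectedComponentIn hx, rfl⟩ ?_ ⟨y, hy, rfl⟩
  rintro _ ⟨z, hz, rfl⟩
  exact (hfix z).not.1 (connectedComponentIn_subset _ _ hz)

theorem localConj_spec (h₁ : ∀ x, x < f x ↔ φ x < g (φ x))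
    (hfix : ∀ x, f x = x ↔ g (φ x) = φ x) (hx : f x ≠ x) :
    IsMonoConjOn (localConj f g φ x) f g (connectedComponentIn (fixedPoints f)ᶜ x)
      (connectedComponentIn (fixedPoints g)ᶜ (φ x)) :=
  Classical.epsilon_spec <|
    exists_isMonoConjOn_connectedComponentIn f g hx ((hfix x).not.1 hx) (h₁ x)

theorem localConj_eq (hfix : ∀ x, f x = x ↔ g (φ x) = φ x)
    (hy : y ∈ connectedComponentIn (fixedPoints f)ᶜ x) : localConj f g φ y = localConj f g φ x := by
  rw [localConj, localConj, ← connectedComponentIn_eq hy,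
    ← connectedComponentIn_eq (mapsTo_connectedComponentIn_of_isFixedPt_iff hfix x hy)]

theorem gluedConj_of_eq (hx : f x = x) : gluedConj f g φ x = φ x := if_pos hx

theorem gluedConj_of_ne (hx : f x ≠ x) : gluedConj f g φ x = localConj f g φ x x := if_neg hx

theorem gluedConj_mem (h₁ : ∀ x, x < f x ↔ φ x < g (φ x))
    (hfix : ∀ x, f x = x ↔ g (φ x) = φ x) (hx : f x ≠ x) :
    gluedConj f g φ x ∈ connectedComponentIn (fixedPoints g)ᶜ (φ x) := by
  rw [gluedConj_of_ne hx]
  exact (localConj_spec h₁ hfix hx).mapsTo (mem_connectedComponentIn hx)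

theorem gluedConj_lt (h₁ : ∀ x, x < f x ↔ φ x < g (φ x))
    (hfix : ∀ x, f x = x ↔ g (φ x) = φ x) (ha : f a = a) (hxa : x < a) :
    gluedConj f g φ x < φ a := by
  by_cases hx : f x = x
  · rw [gluedConj_of_eq hx]
    exact φ.strictMono hxa
  · exact lt_of_mem_connectedComponentIn_of_notMem (gluedConj_mem h₁ hfix hx)
      (not_not.2 ((hfix a).1 ha)) (φ.strictMono hxa)

theorem lt_gluedConj (h₁ : ∀ x, x < f x ↔ φ x < g (φ x))
    (hfix : ∀ x, f x = x ↔ g (φ x) = φ x) (ha : f a = a) (hax : a < x) :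
    φ a < gluedConj f g φ x := by
  by_cases hx : f x = x
  · rw [gluedConj_of_eq hx]
    exact φ.strictMono hax
  · exact lt_of_mem_connectedComponentIn_of_notMem' (gluedConj_mem h₁ hfix hx)
      (not_not.2 ((hfix a).1 ha)) (φ.strictMono hax)

theorem strictMono_gluedConj (h₁ : ∀ x, x < f x ↔ φ x < g (φ x))
    (hfix : ∀ x, f x = x ↔ g (φ x) = φ x) : StrictMono (gluedConj f g φ) := by
  intro x y hxy
  by_cases hx : f x = x
  · exact gluedConj_of_eq hx ▸ lt_gluedConj h₁ hfix hx hxy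
  by_cases hy : f y = y
  · exact gluedConj_of_eq hy ▸ gluedConj_lt h₁ hfix hy hxy
  by_cases hyx : y ∈ connectedComponentIn (fixedPoints f)ᶜ x
  · rw [gluedConj_of_ne hx, gluedConj_of_ne hy, localConj_eq hfix hyx]
    exact (localConj_spec h₁ hfix hx).strictMonoOn (mem_connectedComponentIn hx) hyx hxy
  obtain ⟨a, ⟨hxa, hay⟩, ha⟩ := exists_notMem_Icc_of_notMem_connectedComponentIn hxy.le hyx
  have ha : f a = a := not_not.1 ha
  exact (gluedConj_lt h₁ hfix ha (hxa.lt_of_ne (by rintro rfl; exact hx ha))).trans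
    (lt_gluedConj h₁ hfix ha (hay.lt_of_ne (by rintro rfl; exact hy ha)))

theorem surjective_gluedConj (h₁ : ∀ x, x < f x ↔ φ x < g (φ x))
    (hfix : ∀ x, f x = x ↔ g (φ x) = φ x) : Surjective (gluedConj f g φ) := by
  intro v
  obtain ⟨u, rfl⟩ := φ.surjective v
  by_cases hu : f u = u
  · exact ⟨u, gluedConj_of_eq hu⟩
  obtain ⟨w, hw, hwv⟩ := (localConj_spec h₁ hfix hu).surjOn
    (mem_connectedComponentIn ((hfix u).not.1 hu))
  refine ⟨w, ?_⟩
  rw [gluedConj_of_ne (connectedComponentIn_subset _ _ hw), localConj_eq hfix hw, hwv]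

theorem gluedConj_semiconj (h₁ : ∀ x, x < f x ↔ φ x < g (φ x))
    (hfix : ∀ x, f x = x ↔ g (φ x) = φ x) (x : ℝ) :
    gluedConj f g φ (f x) = g (gluedConj f g φ x) := by
  by_cases hx : f x = x
  · rw [hx, gluedConj_of_eq hx, (hfix x).1 hx]
  have hfx := f.strictMono.apply_mem_connectedComponentIn hx
  rw [gluedConj_of_ne (connectedComponentIn_subset _ _ hfx), gluedConj_of_ne hx,
    localConj_eq hfix hfx]
  exact (localConj_spec h₁ hfix hx).semiconj x (mem_connectedComponentIn hx)

end Gluing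

theorem exists_orderIso_semiconj (f g φ : ℝ ≃o ℝ) (h₁ : ∀ x, x < f x ↔ φ x < g (φ x))
    (h₂ : ∀ x, f x < x ↔ g (φ x) < φ x) : ∃ H : ℝ ≃o ℝ, ∀ x, H (f x) = g (H x) := by
  have hfix : ∀ x, f x = x ↔ g (φ x) = φ x := fun x => eq_iff_eq_of_lt_iff_lt (h₁ x) (h₂ x)
  exact ⟨(strictMono_gluedConj h₁ hfix).orderIsoOfSurjective _ (surjective_gluedConj h₁ hfix),
    gluedConj_semiconj h₁ hfix⟩

theorem exists_homeomorph_semiconj_of_strictAnti (f g : ℝ ≃o ℝ) {φ : ℝ → ℝ} (hφ : StrictAnti φ)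
    (hφs : Surjective φ) (h₁ : ∀ x, x < f x ↔ g (φ x) < φ x)
    (h₂ : ∀ x, f x < x ↔ φ x < g (φ x)) : ∃ H : ℝ ≃ₜ ℝ, ∀ x, H (f x) = g (H x) := by
  -- conjugating `g` by `x ↦ -x` makes `-φ` an increasing sign-matching bijection
  set g' : ℝ ≃o ℝ := (OrderIso.neg ℝ).trans (g.dual.trans (OrderIso.neg ℝ).symm)
  have hg' : ∀ y, g' y = -g (-y) := fun _ => rfl
  set Φ := hφ.neg.orderIsoOfSurjective _ fun v => (hφs (-v)).imp fun _ hu => by simp [hu]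
  have hΦ : ∀ x, Φ x = -φ x := fun _ => rfl
  obtain ⟨H, hH⟩ := exists_orderIso_semiconj f g' Φ
    (fun x => by simpa [hΦ, hg'] using h₁ x) (fun x => by simpa [hΦ, hg'] using h₂ x)
  exact ⟨H.toHomeomorph.trans (Homeomorph.neg ℝ), fun x => by simp [hH, hg']⟩

theorem stmt_7_general
    (f g : ℝ → ℝ)
    (hfm : StrictMono f) (hfb : Function.Bijective f)
    (hgm : StrictMono g) (hgb : Function.Bijective g) :
    (∃ h : ℝ → ℝ, Continuous h ∧ Function.Bijective h ∧ ∀ x, h (f x) = g (h x)) ↔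
    (∃ φ : ℝ → ℝ, Function.Bijective φ ∧
      ((StrictMono φ ∧ (∀ x, x < f x ↔ φ x < g (φ x)) ∧ (∀ x, f x < x ↔ g (φ x) < φ x)) ∨
       (StrictAnti φ ∧ (∀ x, x < f x ↔ g (φ x) < φ x) ∧ (∀ x, f x < x ↔ φ x < g (φ x))))) := by
  set F := hfm.orderIsoOfSurjective f hfb.2
  set G := hgm.orderIsoOfSurjective g hgb.2
  constructor
  · rintro ⟨h, hc, hb, hconj⟩
    refine ⟨h, hb, ?_⟩
    rcases hc.strictMono_of_inj hb.1 with hm | ha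
    · exact Or.inl ⟨hm, fun x => hconj x ▸ hm.lt_iff_lt.symm,
        fun x => hconj x ▸ hm.lt_iff_lt.symm⟩
    · exact Or.inr ⟨ha, fun x => hconj x ▸ ha.lt_iff_gt.symm,
        fun x => hconj x ▸ ha.lt_iff_gt.symm⟩
  · rintro ⟨φ, hφ, ⟨hm, h₁, h₂⟩ | ⟨ha, h₁, h₂⟩⟩
    · obtain ⟨H, hH⟩ := exists_orderIso_semiconj F G (hm.orderIsoOfSurjective φ hφ.2) h₁ h₂
      exact ⟨H, H.continuous, H.bijective, hH⟩
    · obtain ⟨H, hH⟩ := exists_homeomorph_semiconj_of_strictAnti F G ha hφ.2 h₁ h₂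
      exact ⟨H, H.continuous, H.bijective, hH⟩

/-- two increasing homeomorphisms of the real line with finitely many
fixed points are topologically conjugate iff they have the same number of fixed
points with the same sequence of stabilities, or with the reversed sequence.
"Same (resp. reversed) sequence of stabilities" is expressed by the existence of a
strictly increasing (resp. strictly decreasing) bijection of the line matching the
sign of `f x − x` with the sign of `g y − y` (resp. the opposite sign), which in
particular matches the fixed points in order (resp. reversed order). -/
theorem stmt_7
    (f g : ℝ → ℝ)
    (hfc : Continuous f) (hfm : StrictMono f) (hfb : Function.Bijective f)
    (hgc : Continuous g) (hgm : StrictMono g) (hgb : Function.Bijective g)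
    (hffin : {x : ℝ | f x = x}.Finite) (hgfin : {x : ℝ | g x = x}.Finite) :
    (∃ h : ℝ → ℝ, Continuous h ∧ Function.Bijective h ∧ ∀ x, h (f x) = g (h x)) ↔
    (∃ φ : ℝ → ℝ, Function.Bijective φ ∧
      ((StrictMono φ ∧ (∀ x, x < f x ↔ φ x < g (φ x)) ∧ (∀ x, f x < x ↔ g (φ x) < φ x)) ∨
       (StrictAnti φ ∧ (∀ x, x < f x ↔ g (φ x) < φ x) ∧ (∀ x, f x < x ↔ φ x < g (φ x))))) :=
  stmt_7_general f g hfm hfb hgm hgb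
end

section
/- For small μ > 0, the flip normal form g(x) = −(1 + μ)x + x³ has 0 as a repelling fixed point, and there exist points ±p with p > 0 forming an attracting period-2 orbit, such that g(p) = −p, g(−p) = p, g²(x) > x for x ∈ (0, p), and 0 is the unique fixed point of g in [−p, p]. -/
open Set

/-- A fixed point which is attracting (for iterations of `f`). -/
def AttractingFix (f : ℝ → ℝ) (p : ℝ) : Prop :=
  f p = p ∧ ∃ η > 0, ∀ x ∈ Set.Ioo (p - η) (p + η),
    Filter.Tendsto (fun n => f^[n] x) Filter.atTop (nhds p)

/-- A fixed point which is repelling: nearby points eventually leave a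
neighborhood of `p`. -/
def RepellingFix (f : ℝ → ℝ) (p : ℝ) : Prop :=
  f p = p ∧ ∃ η > 0, ∀ x ∈ Set.Ioo (p - η) (p + η), x ≠ p →
    ∃ n, f^[n] x ∉ Set.Ioo (p - η) (p + η)

open Filter in
lemma attract_of_contr {f : ℝ → ℝ} {p k η : ℝ} (hk0 : 0 ≤ k) (hk1 : k < 1) (hη : 0 < η)
    (hf : ∀ x, |x - p| < η → |f x - p| ≤ k * |x - p|) : AttractingFix f p := by
  have hfp : f p = p := by
    have h := hf p (by simpa using hη)
    simp only [sub_self, abs_zero, mul_zero] at h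
    have := abs_nonpos_iff.mp h
    linarith [sub_eq_zero.mp this]
  refine ⟨hfp, η, hη, ?_⟩
  intro x hx
  have hx' : |x - p| < η := abs_lt.mpr ⟨by linarith [hx.1], by linarith [hx.2]⟩
  have key : ∀ n, |f^[n] x - p| ≤ k ^ n * |x - p| := by
    intro n
    induction n with
    | zero => simp
    | succ n ih =>
      have hkn : k ^ n ≤ 1 := pow_le_one₀ hk0 hk1.le
      have h1 : |f^[n] x - p| < η := by
        have : k ^ n * |x - p| ≤ 1 * |x - p| :=
          mul_le_mul_of_nonneg_right hkn (abs_nonneg _)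
        calc |f^[n] x - p| ≤ k ^ n * |x - p| := ih
          _ ≤ 1 * |x - p| := this
          _ < η := by simpa using hx'
      rw [Function.iterate_succ_apply']
      calc |f (f^[n] x) - p| ≤ k * |f^[n] x - p| := hf _ h1
        _ ≤ k * (k ^ n * |x - p|) := mul_le_mul_of_nonneg_left ih hk0
        _ = k ^ (n + 1) * |x - p| := by ring
  have h0 : Tendsto (fun n : ℕ => k ^ n * |x - p|) atTop (nhds 0) := by
    simpa using (tendsto_pow_atTop_nhds_zero_of_lt_one hk0 hk1).mul_const |x - p|
  have habs : Tendsto (fun n : ℕ => |f^[n] x - p|) atTop (nhds 0) :=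
    squeeze_zero (fun n => abs_nonneg _) key h0
  rw [tendsto_iff_dist_tendsto_zero]
  simpa [Real.dist_eq] using habs

set_option maxHeartbeats 1600000 in
/-- for small `μ > 0` the flip normal form `g x = -(1+μ)x + x³`
has `0` as a repelling fixed point and an attracting period-2 orbit `{-p, p}`:
there is `p > 0` with `g p = -p`, `g (-p) = p`, `g² > id` on `(0, p)`, and `0`
is the unique fixed point of `g` in `[-p, p]`. -/
theorem stmt_18 :
    ∃ μ₀ > 0, ∀ μ : ℝ, 0 < μ → μ < μ₀ →
      RepellingFix (fun x : ℝ => -(1 + μ) * x + x ^ 3) 0 ∧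
      ∃ p > 0,
        (-(1 + μ) * p + p ^ 3 = -p) ∧
        (-(1 + μ) * (-p) + (-p) ^ 3 = p) ∧
        (∀ x ∈ Ioo 0 p,
          x < (fun y : ℝ => -(1 + μ) * y + y ^ 3) ((fun y : ℝ => -(1 + μ) * y + y ^ 3) x)) ∧
        (∀ x ∈ Icc (-p) p, -(1 + μ) * x + x ^ 3 = x ↔ x = 0) ∧
        AttractingFix
          (fun x : ℝ => (fun y : ℝ => -(1 + μ) * y + y ^ 3) (-(1 + μ) * x + x ^ 3)) p ∧
        AttractingFix
          (fun x : ℝ => (fun y : ℝ => -(1 + μ) * y + y ^ 3) (-(1 + μ) * x + x ^ 3)) (-p) := by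
  refine ⟨1/8, by norm_num, fun μ hμ hμ8 => ?_⟩
  set g : ℝ → ℝ := fun x : ℝ => -(1 + μ) * x + x ^ 3 with hg
  -- the period-2 point
  set p : ℝ := Real.sqrt μ with hpdef
  have hp : 0 < p := Real.sqrt_pos.mpr hμ
  have hp2 : p ^ 2 = μ := Real.sq_sqrt hμ.le
  have hp1 : p < 1 := by nlinarith
  constructor
  · -- repelling fixed point at 0
    refine ⟨by simp [hg], Real.sqrt (μ/2), Real.sqrt_pos.mpr (by linarith), ?_⟩
    set η : ℝ := Real.sqrt (μ/2) with hηdef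
    have hη : 0 < η := Real.sqrt_pos.mpr (by linarith)
    have hη2 : η ^ 2 = μ / 2 := Real.sq_sqrt (by linarith)
    intro x hx hx0
    by_contra hcon
    push_neg at hcon
    have hxabs : 0 < |x| := abs_pos.mpr hx0
    have hgrow : ∀ n, (1 + μ/2) ^ n * |x| ≤ |g^[n] x| := by
      intro n
      induction n with
      | zero => simp
      | succ n ih =>
        have hmem := hcon n
        have hyabs : |g^[n] x| < η := by
          rw [abs_lt]; constructor
          · have := hmem.1; simpa using this
          · have := hmem.2; simpa using this
        set y := g^[n] x with hy
        have hy2 : y ^ 2 < μ / 2 := by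
          have : y ^ 2 = |y| ^ 2 := (sq_abs y).symm
          rw [this, ← hη2]
          exact pow_lt_pow_left₀ hyabs (abs_nonneg _) (by norm_num)
        have hfac : g y = y * (y ^ 2 - (1 + μ)) := by simp only [hg]; ring
        have habs : |g y| = |y| * (1 + μ - y ^ 2) := by
          rw [hfac, abs_mul, abs_of_neg (by nlinarith : y ^ 2 - (1 + μ) < 0)]
          ring_nf
        rw [Function.iterate_succ_apply', ← hy, habs]
        have h1 : (1 + μ/2) * |y| ≤ (1 + μ - y ^ 2) * |y| := by
          apply mul_le_mul_of_nonneg_right _ (abs_nonneg _)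
          nlinarith
        calc (1 + μ/2) ^ (n+1) * |x| = (1 + μ/2) * ((1 + μ/2) ^ n * |x|) := by ring
          _ ≤ (1 + μ/2) * |y| := mul_le_mul_of_nonneg_left ih (by linarith)
          _ ≤ (1 + μ - y ^ 2) * |y| := h1
          _ = |y| * (1 + μ - y ^ 2) := by ring
    obtain ⟨n, hn⟩ := pow_unbounded_of_one_lt (η / |x|) (show (1:ℝ) < 1 + μ/2 by linarith)
    have h1 : η < (1 + μ/2) ^ n * |x| := by
      rw [div_lt_iff₀ hxabs] at hn; linarith
    have h2 : |g^[n] x| < η := by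
      have hmem := hcon n
      rw [abs_lt]; constructor
      · have := hmem.1; simpa using this
      · have := hmem.2; simpa using this
    linarith [hgrow n]
  · refine ⟨p, hp, ?_, ?_, ?_, ?_, ?_, ?_⟩
    · linear_combination p * hp2
    · linear_combination (-p) * hp2
    · -- g² > id on (0,p)
      intro x hx
      show x < -(1 + μ) * (-(1 + μ) * x + x ^ 3) + (-(1 + μ) * x + x ^ 3) ^ 3
      obtain ⟨hx0, hxp⟩ := hx
      have hxμ : x ^ 2 < μ := by nlinarith
      have key : -(1 + μ) * (-(1 + μ) * x + x ^ 3) + (-(1 + μ) * x + x ^ 3) ^ 3 - x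
          = x * (μ - x ^ 2) *
            (2 - 2*μ - 3*μ*(μ - x ^ 2) - μ*(μ - x ^ 2)^2 + 3*(μ - x ^ 2)
              + 3*(μ - x ^ 2)^2 + (μ - x ^ 2)^3) := by ring
      have hupos : 0 < μ - x ^ 2 := by linarith
      have hfac : 0 < 2 - 2*μ - 3*μ*(μ - x ^ 2) - μ*(μ - x ^ 2)^2 + 3*(μ - x ^ 2)
              + 3*(μ - x ^ 2)^2 + (μ - x ^ 2)^3 := by nlinarith [sq_nonneg (μ - x^2)]
      nlinarith [mul_pos (mul_pos hx0 hupos) hfac]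
    · -- unique fixed point in [-p, p]
      intro x hx
      constructor
      · intro heq
        have h0 : x * (x ^ 2 - (2 + μ)) = 0 := by linear_combination heq
        rcases mul_eq_zero.mp h0 with h | h
        · exact h
        · exfalso
          have hx2 : x ^ 2 ≤ p ^ 2 := sq_le_sq' (by linarith [hx.1]) hx.2
          nlinarith
      · intro h; subst h; ring
    · -- attracting at p
      -- contraction estimates
      have hA : ∀ x : ℝ, |x - p| < μ * p → |g x + p| ≤ |x - p| := by
        intro x hx
        obtain ⟨h1, h2⟩ := abs_lt.mp hx
        have hfac : g x + p = (x - p) * (x ^ 2 + x * p - 1) := by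
          simp only [hg]; linear_combination x * hp2
        rw [hfac, abs_mul]
        have hx0 : 0 < x := by nlinarith
        have hb : |x ^ 2 + x * p - 1| ≤ 1 := by
          rw [abs_le]
          constructor
          · nlinarith [mul_pos hx0 (show 0 < x + p by linarith)]
          · nlinarith [mul_lt_mul_of_pos_right h2 hp, mul_lt_mul_of_pos_left h2 hx0, hp2,
              mul_pos hx0 hp]
        exact mul_le_of_le_one_right (abs_nonneg _) hb
      have hB : ∀ y : ℝ, |y + p| < μ * p → |g y - p| ≤ (1 - μ) * |y + p| := by
        intro y hy
        obtain ⟨h1, h2⟩ := abs_lt.mp hy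
        have hfac : g y - p = (y + p) * (y ^ 2 - y * p - 1) := by
          simp only [hg]; linear_combination y * hp2
        rw [hfac, abs_mul, mul_comm]
        apply mul_le_mul_of_nonneg_right _ (abs_nonneg _)
        rw [abs_le]
        have hpe1 : (y + p) * p < μ * p * p := mul_lt_mul_of_pos_right h2 hp
        have hpe2 : -(μ * p) * p < (y + p) * p := mul_lt_mul_of_pos_right h1 hp
        have hpp : μ * p * p = μ * μ := by linear_combination μ * hp2
        have he2 : (y + p) ^ 2 < (μ * p) ^ 2 := sq_lt_sq' h1 h2
        have hmp2 : (μ * p) ^ 2 = μ ^ 2 * μ := by linear_combination μ ^ 2 * hp2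
        have hkey : y ^ 2 - y * p - 1 - (1 - μ)
            = 3 * μ - 2 - 3 * ((y + p) * p) + (y + p) ^ 2 := by
          linear_combination 2 * hp2
        have hμ2 : μ * μ < μ / 8 := by nlinarith
        have hμ3 : μ ^ 2 * μ < μ / 8 := by nlinarith
        constructor
        · nlinarith [sq_nonneg (y + p)]
        · nlinarith [sq_nonneg (y + p)]
      have hCp : ∀ x : ℝ, |x - p| < μ * p →
          |g (g x) - p| ≤ (1 - μ) * |x - p| := by
        intro x hx
        have a := hA x hx
        have b := hB (g x) (lt_of_le_of_lt a hx)
        calc |g (g x) - p| ≤ (1 - μ) * |g x + p| := b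
          _ ≤ (1 - μ) * |x - p| := mul_le_mul_of_nonneg_left a (by linarith)
      exact attract_of_contr (by linarith) (by linarith)
        (mul_pos hμ hp) (fun x hx => hCp x hx)
    · -- attracting at -p
      have hA : ∀ x : ℝ, |x - p| < μ * p → |g x + p| ≤ |x - p| := by
        intro x hx
        obtain ⟨h1, h2⟩ := abs_lt.mp hx
        have hfac : g x + p = (x - p) * (x ^ 2 + x * p - 1) := by
          simp only [hg]; linear_combination x * hp2
        rw [hfac, abs_mul]
        have hx0 : 0 < x := by nlinarith
        have hb : |x ^ 2 + x * p - 1| ≤ 1 := by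
          rw [abs_le]
          constructor
          · nlinarith [mul_pos hx0 (show 0 < x + p by linarith)]
          · nlinarith [mul_lt_mul_of_pos_right h2 hp, mul_lt_mul_of_pos_left h2 hx0, hp2,
              mul_pos hx0 hp]
        exact mul_le_of_le_one_right (abs_nonneg _) hb
      have hB : ∀ y : ℝ, |y + p| < μ * p → |g y - p| ≤ (1 - μ) * |y + p| := by
        intro y hy
        obtain ⟨h1, h2⟩ := abs_lt.mp hy
        have hfac : g y - p = (y + p) * (y ^ 2 - y * p - 1) := by
          simp only [hg]; linear_combination y * hp2
        rw [hfac, abs_mul, mul_comm]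
        apply mul_le_mul_of_nonneg_right _ (abs_nonneg _)
        rw [abs_le]
        have hpe1 : (y + p) * p < μ * p * p := mul_lt_mul_of_pos_right h2 hp
        have hpe2 : -(μ * p) * p < (y + p) * p := mul_lt_mul_of_pos_right h1 hp
        have hpp : μ * p * p = μ * μ := by linear_combination μ * hp2
        have he2 : (y + p) ^ 2 < (μ * p) ^ 2 := sq_lt_sq' h1 h2
        have hmp2 : (μ * p) ^ 2 = μ ^ 2 * μ := by linear_combination μ ^ 2 * hp2
        have hkey : y ^ 2 - y * p - 1 - (1 - μ)
            = 3 * μ - 2 - 3 * ((y + p) * p) + (y + p) ^ 2 := by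
          linear_combination 2 * hp2
        have hμ2 : μ * μ < μ / 8 := by nlinarith
        have hμ3 : μ ^ 2 * μ < μ / 8 := by nlinarith
        constructor
        · nlinarith [sq_nonneg (y + p)]
        · nlinarith [sq_nonneg (y + p)]
      have hCm : ∀ x : ℝ, |x + p| < μ * p →
          |g (g x) + p| ≤ (1 - μ) * |x + p| := by
        intro x hx
        have b := hB x hx
        have hlt : |g x - p| < μ * p := by
          have : (1 - μ) * |x + p| ≤ 1 * |x + p| :=
            mul_le_mul_of_nonneg_right (by linarith) (abs_nonneg _)
          calc |g x - p| ≤ (1 - μ) * |x + p| := b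
            _ ≤ 1 * |x + p| := this
            _ < μ * p := by simpa using hx
        have a := hA (g x) hlt
        calc |g (g x) + p| ≤ |g x - p| := a
          _ ≤ (1 - μ) * |x + p| := b
      have hf' : ∀ x : ℝ, |x - -p| < μ * p → |g (g x) - -p| ≤ (1 - μ) * |x - -p| := by
        intro x hx
        have hx' : |x + p| < μ * p := by rwa [sub_neg_eq_add] at hx
        have h := hCm x hx'
        rw [sub_neg_eq_add, sub_neg_eq_add]
        exact h
      exact attract_of_contr (by linarith) (by linarith) (mul_pos hμ hp) hf'
end
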